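/- arXiv:2012.03588 — 2 statements merged into one kernel-verified Lean document; each statement's English description precedes it below -/
import Mathlib

section
/- If a Borel probability measure π on [0,1] has first moment 1/2 and its even centralized moments satisfy ∫ (t - 1/2)^{2n} dπ(t) = ((2n)!/n!) · ℓ^n · p^{⟨n⟩} for all n ∈ ℕ, where ℓ, p > 0 and p^{⟨n⟩} = ∏_{i=0}^{n-1} p/(1+ip), then ℓ ≤ 1/16. -/
/-!
Since `|t - 1/2| ≤ 1/2` on `[0,1]`, the `2n`-th central moment is at most `4⁻ⁿ`. Writing
`(2n)!/n! = ∏_{i<n} 2(2i+1)`, the prescribed moment times `4ⁿ` is a product `∏_{i<n} xᵢ` with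
`xᵢ = 8ℓ(2i+1)p/(1+ip) → 16ℓ`. Such products stay `≤ 1` only if the limit is `≤ 1`: by Cesàro,
the averages `(1/n) ∑_{i<n} log xᵢ ≤ 0` tend to `log (16ℓ)`.
-/

open MeasureTheory Filter Finset Topology

theorem Nat.factorial_two_mul_eq (n : ℕ) :
    (2 * n).factorial = 2 ^ n * n.factorial * ∏ i ∈ range n, (2 * i + 1) := by
  induction n with
  | zero => rfl
  | succ n ih =>
    rw [show 2 * (n + 1) = 2 * n + 1 + 1 by ring, Nat.factorial_succ, Nat.factorial_succ, ih,
      prod_range_succ, Nat.factorial_succ, pow_succ]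
    ring

theorem integral_pow_le_of_ae_abs_le {α : Type*} [MeasurableSpace α] {μ : Measure α}
    [IsProbabilityMeasure μ] {f : α → ℝ} {r : ℝ} (hf : ∀ᵐ x ∂μ, |f x| ≤ r) (k : ℕ) :
    ∫ x, f x ^ k ∂μ ≤ r ^ k := by
  have hbound : ∀ᵐ x ∂μ, ‖f x ^ k‖ ≤ r ^ k := hf.mono fun x hx => by
    rw [norm_pow, Real.norm_eq_abs]
    exact pow_le_pow_left₀ (abs_nonneg _) hx k
  simpa using (le_abs_self _).trans (norm_integral_le_of_norm_le_const hbound)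

theorem le_one_of_tendsto_of_prod_range_le_one {x : ℕ → ℝ} {L : ℝ} (hx : ∀ i, 0 < x i)
    (hlim : Tendsto x atTop (𝓝 L)) (hprod : ∀ n, ∏ i ∈ range n, x i ≤ 1) : L ≤ 1 := by
  by_contra! hL
  have hlog : Tendsto (fun n : ℕ => (n⁻¹ : ℝ) * ∑ i ∈ range n, Real.log (x i)) atTop
      (𝓝 (Real.log L)) :=
    ((Real.continuousAt_log (by positivity)).tendsto.comp hlim).cesaro
  have hmean_nonpos : ∀ n : ℕ, (n⁻¹ : ℝ) * ∑ i ∈ range n, Real.log (x i) ≤ 0 := fun n => by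
    rw [← Real.log_prod fun i _ => (hx i).ne']
    exact mul_nonpos_of_nonneg_of_nonpos (by positivity)
      ((Real.log_nonpos_iff (prod_nonneg fun i _ => (hx i).le)).2 (hprod n))
  exact (Real.log_pos hL).not_ge (le_of_tendsto' hlog hmean_nonpos)

theorem pi_measure_ell_le_sixteenth_general (π : Measure ℝ) [IsProbabilityMeasure π]
    (hsupp : π (Set.Icc (0 : ℝ) 1)ᶜ = 0)
    (ℓ p : ℝ) (hℓ : 0 < ℓ) (hp : 0 < p)
    (hmom : ∀ n : ℕ, 1 ≤ n →
      ∫ t, (t - 1 / 2) ^ (2 * n) ∂π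
        = ((2 * n).factorial : ℝ) / (n.factorial : ℝ) * ℓ ^ n *
            ∏ i ∈ Finset.range n, p / (1 + i * p)) :
    ℓ ≤ 1 / 16 := by
  set x : ℕ → ℝ := fun i => 8 * ℓ * ((2 * i + 1) * (p / (1 + i * p)))
  have hx_pos : ∀ i, 0 < x i := fun i => by positivity
  have hx_lim : Tendsto x atTop (𝓝 (16 * ℓ)) := by
    convert (tendsto_add_mul_div_add_mul_atTop_nhds p 1 (2 * p) hp.ne').const_mul (8 * ℓ) using 2
    · simp only [x]
      ring
    · field_simp
      ring
  have hcentered : ∀ᵐ t ∂π, |t - 1 / 2| ≤ 1 / 2 := (ae_iff.2 hsupp).mono fun t ht => by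
    rw [abs_le]
    constructor <;> linarith [ht.1, ht.2]
  have hx_prod : ∀ n, ∏ i ∈ range n, x i ≤ 1 := by
    rintro (_ | n)
    · simp
    calc ∏ i ∈ range (n + 1), x i = 4 ^ (n + 1) * ∫ t, (t - 1 / 2) ^ (2 * (n + 1)) ∂π := by
          rw [hmom (n + 1) (by omega), Nat.factorial_two_mul_eq]
          simp only [x, prod_mul_distrib, prod_const, card_range]
          push_cast
          rw [show (8 : ℝ) = 4 * 2 by norm_num, mul_pow]
          field_simp
      _ ≤ 4 ^ (n + 1) * (1 / 2) ^ (2 * (n + 1)) := by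
          gcongr
          exact integral_pow_le_of_ae_abs_le hcentered _
      _ = 1 := by rw [pow_mul, ← mul_pow]; norm_num
  linarith [le_one_of_tendsto_of_prod_range_le_one hx_pos hx_lim hx_prod]

theorem pi_measure_ell_le_sixteenth (π : Measure ℝ) [IsProbabilityMeasure π]
    (hsupp : π (Set.Icc (0 : ℝ) 1)ᶜ = 0)
    (hmean : ∫ t, t ∂π = 1 / 2) (ℓ p : ℝ) (hℓ : 0 < ℓ) (hp : 0 < p)
    (hmom : ∀ n : ℕ, 1 ≤ n →
      ∫ t, (t - 1 / 2) ^ (2 * n) ∂π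
        = ((2 * n).factorial : ℝ) / (n.factorial : ℝ) * ℓ ^ n *
            ∏ i ∈ Finset.range n, p / (1 + i * p)) :
    ℓ ≤ 1 / 16 :=
  pi_measure_ell_le_sixteenth_general π hsupp ℓ p hℓ hp hmom
end

section
/- Let f, g : I → ℝ be n-times continuously differentiable on an open interval I with f'g - fg' nowhere zero, and define Φ = W^{2,0}/W^{1,0} and Ψ = -W^{2,1}/W^{1,0}, where W^{i,j} = f^{(i)}g^{(j)} - f^{(j)}g^{(i)}. Define sequences φ_i, ψ_i by φ_0 = 0, ψ_0 = 1, φ_{i+1} = φ_i' + φ_i Φ + ψ_i, ψ_{i+1} = φ_i Ψ + ψ_i'. Then for all i, j ∈ {0,…,n}: W^{i,j} = (φ_i ψ_j - φ_j ψ_i) · W^{1,0}. -/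
/-! Since `W^{1,0} ≠ 0`, Cramer's rule makes `f` and `g` solutions of the linear equation
`y'' = Φ y' + Ψ y`. Differentiating `y^{(i)} = φ_i y' + ψ_i y` and eliminating `y''` with this
equation gives the same identity for `i + 1`: the recursion for `(φ_i, ψ_i)` is exactly this
step. Substituting the identity for `f` and `g` into `W^{i,j}` leaves `(φ_i ψ_j - φ_j ψ_i) W^{1,0}`.
Along the way `φ_i, ψ_i` are `C^{n-i}` on `I`, as `Φ, Ψ` are `C^{n-2}` there. -/

/-- The pair of sequences `(φ_i, ψ_i)` defined by the recursion
`φ_0 = 0`, `ψ_0 = 1`, `φ_{i+1} = φ_i' + φ_i Φ + ψ_i`, `ψ_{i+1} = φ_i Ψ + ψ_i'`. -/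
noncomputable def phipsi (Φ Ψ : ℝ → ℝ) : ℕ → (ℝ → ℝ) × (ℝ → ℝ)
  | 0 => (fun _ => 0, fun _ => 1)
  | i + 1 =>
      (fun x => deriv (phipsi Φ Ψ i).1 x + (phipsi Φ Ψ i).1 x * Φ x + (phipsi Φ Ψ i).2 x,
       fun x => (phipsi Φ Ψ i).1 x * Ψ x + deriv (phipsi Φ Ψ i).2 x)

open Set Filter Topology

theorem contDiff_iteratedDeriv_of_add_le {𝕜 F : Type*} [NontriviallyNormedField 𝕜]
    [NormedAddCommGroup F] [NormedSpace 𝕜 F] {f : 𝕜 → F} {n k i : ℕ}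
    (hf : ContDiff 𝕜 n f) (h : k + i ≤ n) : ContDiff 𝕜 k (iteratedDeriv i f) := by
  rw [iteratedDeriv_eq_iterate]
  exact (hf.of_le (by exact_mod_cast h)).iterate_deriv' k i

noncomputable def wronskian (f g : ℝ → ℝ) (i j : ℕ) (x : ℝ) : ℝ :=
  iteratedDeriv i f x * iteratedDeriv j g x - iteratedDeriv j f x * iteratedDeriv i g x

section Wronskian

variable {f g : ℝ → ℝ}

theorem contDiff_wronskian {n k i j : ℕ} (hf : ContDiff ℝ n f) (hg : ContDiff ℝ n g)
    (hi : k + i ≤ n) (hj : k + j ≤ n) : ContDiff ℝ k (wronskian f g i j) :=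
  ((contDiff_iteratedDeriv_of_add_le hf hi).mul (contDiff_iteratedDeriv_of_add_le hg hj)).sub
    ((contDiff_iteratedDeriv_of_add_le hf hj).mul (contDiff_iteratedDeriv_of_add_le hg hi))

theorem iteratedDeriv_two_eq_of_wronskian_ne_zero {x : ℝ} (hx : wronskian f g 1 0 x ≠ 0) :
    (iteratedDeriv 2 f x = wronskian f g 2 0 x / wronskian f g 1 0 x * deriv f x
      + -(wronskian f g 2 1 x / wronskian f g 1 0 x) * f x) ∧
    (iteratedDeriv 2 g x = wronskian f g 2 0 x / wronskian f g 1 0 x * deriv g x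
      + -(wronskian f g 2 1 x / wronskian f g 1 0 x) * g x) := by
  constructor <;>
  · rw [neg_mul, ← sub_eq_add_neg, div_mul_eq_mul_div, div_mul_eq_mul_div, ← sub_div,
      eq_div_iff hx]
    simp only [wronskian, iteratedDeriv_one, iteratedDeriv_zero]
    ring

theorem wronskian_eq_of_iteratedDeriv_eq {i j : ℕ} {x p q r s : ℝ}
    (hfi : iteratedDeriv i f x = p * deriv f x + q * f x)
    (hgi : iteratedDeriv i g x = p * deriv g x + q * g x)
    (hfj : iteratedDeriv j f x = r * deriv f x + s * f x)
    (hgj : iteratedDeriv j g x = r * deriv g x + s * g x) :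
    wronskian f g i j x = (p * s - r * q) * wronskian f g 1 0 x := by
  simp only [wronskian, hfi, hgi, hfj, hgj, iteratedDeriv_one, iteratedDeriv_zero]
  ring

end Wronskian

section PhiPsi

variable {Φ Ψ : ℝ → ℝ} {I : Set ℝ}

theorem phipsi_succ_fst (i : ℕ) : (phipsi Φ Ψ (i + 1)).1 =
    fun x => deriv (phipsi Φ Ψ i).1 x + (phipsi Φ Ψ i).1 x * Φ x + (phipsi Φ Ψ i).2 x :=
  rfl

theorem phipsi_succ_snd (i : ℕ) : (phipsi Φ Ψ (i + 1)).2 =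
    fun x => (phipsi Φ Ψ i).1 x * Ψ x + deriv (phipsi Φ Ψ i).2 x :=
  rfl

theorem phipsi_one : phipsi Φ Ψ 1 = (fun _ => 1, fun _ => 0) := by
  simp [phipsi]

theorem contDiffOn_phipsi_succ (hI : IsOpen I) {m : ℕ} (hΦ : ContDiffOn ℝ m Φ I)
    (hΨ : ContDiffOn ℝ m Ψ I) :
    ∀ i ≤ m + 1, ContDiffOn ℝ (m + 1 - i : ℕ) (phipsi Φ Ψ (i + 1)).1 I ∧
      ContDiffOn ℝ (m + 1 - i : ℕ) (phipsi Φ Ψ (i + 1)).2 I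
  | 0, _ => by rw [phipsi_one]; exact ⟨contDiffOn_const, contDiffOn_const⟩
  | i + 1, hi => by
    obtain ⟨hφ, hψ⟩ := contDiffOn_phipsi_succ hI hΦ hΨ i (by omega)
    obtain ⟨k, hk, hk'⟩ : ∃ k, m + 1 - (i + 1) = k ∧ m + 1 - i = k + 1 :=
      ⟨m - i, by omega, by omega⟩
    rw [hk'] at hφ hψ
    rw [hk]
    have hkm : (k : WithTop ℕ∞) ≤ m := by exact_mod_cast (by omega : k ≤ m)
    have hle : (k : WithTop ℕ∞) ≤ (k + 1 : ℕ) := by exact_mod_cast k.le_succ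
    have hd : ∀ {u : ℝ → ℝ}, ContDiffOn ℝ (k + 1 : ℕ) u I → ContDiffOn ℝ k (deriv u) I :=
      fun hu => hu.deriv_of_isOpen hI (by push_cast; rfl)
    rw [phipsi_succ_fst, phipsi_succ_snd]
    exact ⟨((hd hφ).add ((hφ.of_le hle).mul (hΦ.of_le hkm))).add (hψ.of_le hle),
      ((hφ.of_le hle).mul (hΨ.of_le hkm)).add (hd hψ)⟩

theorem differentiableOn_phipsi (hI : IsOpen I) {m : ℕ} (hΦ : ContDiffOn ℝ m Φ I)
    (hΨ : ContDiffOn ℝ m Ψ I) {i : ℕ} (hi : i ≤ m + 1) :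
    DifferentiableOn ℝ (phipsi Φ Ψ i).1 I ∧ DifferentiableOn ℝ (phipsi Φ Ψ i).2 I := by
  cases i with
  | zero => exact ⟨differentiableOn_const _, differentiableOn_const _⟩
  | succ i =>
    obtain ⟨hφ, hψ⟩ := contDiffOn_phipsi_succ hI hΦ hΨ i (by omega)
    have h : ((m + 1 - i : ℕ) : WithTop ℕ∞) ≠ 0 := by exact_mod_cast (by omega : m + 1 - i ≠ 0)
    exact ⟨hφ.differentiableOn h, hψ.differentiableOn h⟩

variable {y : ℝ → ℝ}

theorem iteratedDeriv_succ_eq_phipsi (hI : IsOpen I) (hy : ContDiffOn ℝ 2 y I)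
    (hy2 : ∀ x ∈ I, iteratedDeriv 2 y x = Φ x * deriv y x + Ψ x * y x) {i : ℕ}
    (hφ : DifferentiableOn ℝ (phipsi Φ Ψ i).1 I) (hψ : DifferentiableOn ℝ (phipsi Φ Ψ i).2 I)
    (hyi : ∀ x ∈ I, iteratedDeriv i y x =
      (phipsi Φ Ψ i).1 x * deriv y x + (phipsi Φ Ψ i).2 x * y x)
    {x : ℝ} (hx : x ∈ I) :
    iteratedDeriv (i + 1) y x =
      (phipsi Φ Ψ (i + 1)).1 x * deriv y x + (phipsi Φ Ψ (i + 1)).2 x * y x := by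
  have hxI : I ∈ 𝓝 x := hI.mem_nhds hx
  have hy' : HasDerivAt y (deriv y x) x :=
    ((hy.differentiableOn two_ne_zero x hx).differentiableAt hxI).hasDerivAt
  have hy'' : HasDerivAt (deriv y) (iteratedDeriv 2 y x) x := by
    rw [iteratedDeriv_succ, iteratedDeriv_one]
    exact (((hy.deriv_of_isOpen hI (m := 1) le_rfl).differentiableOn one_ne_zero x hx
      ).differentiableAt hxI).hasDerivAt
  have hsum := ((((hφ x hx).differentiableAt hxI).hasDerivAt.mul hy'').add
    (((hψ x hx).differentiableAt hxI).hasDerivAt.mul hy')).congr_of_eventuallyEq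
    (eventually_of_mem hxI hyi)
  rw [iteratedDeriv_succ, hsum.deriv, hy2 x hx, phipsi_succ_fst, phipsi_succ_snd]
  ring

theorem iteratedDeriv_eq_phipsi (hI : IsOpen I) {m : ℕ} (hΦ : ContDiffOn ℝ m Φ I)
    (hΨ : ContDiffOn ℝ m Ψ I) (hy : ContDiffOn ℝ 2 y I)
    (hy2 : ∀ x ∈ I, iteratedDeriv 2 y x = Φ x * deriv y x + Ψ x * y x) :
    ∀ i ≤ m + 2, ∀ x ∈ I,
      iteratedDeriv i y x = (phipsi Φ Ψ i).1 x * deriv y x + (phipsi Φ Ψ i).2 x * y x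
  | 0, _ => fun x _ => by simp [phipsi]
  | i + 1, hi => by
    obtain ⟨hφ, hψ⟩ := differentiableOn_phipsi hI hΦ hΨ (by omega : i ≤ m + 1)
    exact fun x => iteratedDeriv_succ_eq_phipsi hI hy hy2 hφ hψ
      (iteratedDeriv_eq_phipsi hI hΦ hΨ hy hy2 i (by omega))

end PhiPsi

theorem wronskian_formula (n : ℕ) (hn : 2 ≤ n) (f g : ℝ → ℝ)
    (hf : ContDiff ℝ n f) (hg : ContDiff ℝ n g)
    (a b : ℝ) (I : Set ℝ) (hI : I = Set.Ioo a b)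
    (W : ℕ → ℕ → ℝ → ℝ)
    (hW : ∀ i j x, W i j x =
      iteratedDeriv i f x * iteratedDeriv j g x - iteratedDeriv j f x * iteratedDeriv i g x)
    (hW10 : ∀ x ∈ I, W 1 0 x ≠ 0)
    (Φ Ψ : ℝ → ℝ)
    (hΦ : ∀ x ∈ I, Φ x = W 2 0 x / W 1 0 x)
    (hΨ : ∀ x ∈ I, Ψ x = - (W 2 1 x / W 1 0 x)) :
    ∀ i ≤ n, ∀ j ≤ n, ∀ x ∈ I,
      W i j x = ((phipsi Φ Ψ i).1 x * (phipsi Φ Ψ j).2 x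
          - (phipsi Φ Ψ j).1 x * (phipsi Φ Ψ i).2 x) * W 1 0 x := by
  obtain rfl : W = wronskian f g := funext₃ hW
  obtain ⟨m, rfl⟩ : ∃ m, n = m + 2 := ⟨n - 2, by omega⟩
  subst hI
  have hC20 := contDiff_wronskian (k := m) hf hg le_rfl (by omega) (i := 2) (j := 0)
  have hC21 := contDiff_wronskian (k := m) hf hg le_rfl (by omega) (i := 2) (j := 1)
  have hC10 := contDiff_wronskian (k := m) hf hg (by omega) (by omega) (i := 1) (j := 0)
  have hΦm : ContDiffOn ℝ m Φ (Ioo a b) := (hC20.contDiffOn.div hC10.contDiffOn hW10).congr hΦ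
  have hΨm : ContDiffOn ℝ m Ψ (Ioo a b) :=
    (hC21.contDiffOn.div hC10.contDiffOn hW10).neg.congr hΨ
  have hode : ∀ x ∈ Ioo a b,
      (iteratedDeriv 2 f x = Φ x * deriv f x + Ψ x * f x) ∧
        (iteratedDeriv 2 g x = Φ x * deriv g x + Ψ x * g x) := fun x hx => by
    rw [hΦ x hx, hΨ x hx]
    exact iteratedDeriv_two_eq_of_wronskian_ne_zero (hW10 x hx)
  have h2 : (2 : WithTop ℕ∞) ≤ (m + 2 : ℕ) := by exact_mod_cast (by omega : 2 ≤ m + 2)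
  have hf' := iteratedDeriv_eq_phipsi isOpen_Ioo hΦm hΨm (hf.of_le h2).contDiffOn
    fun x hx => (hode x hx).1
  have hg' := iteratedDeriv_eq_phipsi isOpen_Ioo hΦm hΨm (hg.of_le h2).contDiffOn
    fun x hx => (hode x hx).2
  intro i hi j hj x hx
  exact wronskian_eq_of_iteratedDeriv_eq (hf' i hi x hx) (hg' i hi x hx) (hf' j hj x hx)
    (hg' j hj x hx)
end
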